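/- Let L_i = Σ_j a_{ij}X_j be linear forms over a field K of characteristic 0 and suppose Σ_{j,k} a_{ij}a_{jk}a_{kl} L_j^2 L_k^2 = 0 for all i, l. Then Σ_{j,k} a_{ij}a_{jk} L_j^2 L_k^3 = 0 for all i, and Σ_{j,k} a_{ij}a_{jk}a_{jm} L_j L_k^3 = 0 for all i, m. -/

import Mathlib

/-!
Differentiating the hypothesis with respect to `X_m` and contracting the result with `X_l`
(using `∑_l a_{kl} X_l = L_k`) gives the second identity plus a copy of the hypothesis, so the
second identity holds; contracting it with `X_m` (using `∑_m a_{jm} X_m = L_j`) gives the first.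
-/

open MvPolynomial Finset

section Contraction

variable {R σ ι κ : Type*} [CommSemiring R] [Fintype σ] [Fintype ι] [Fintype κ]

theorem sum_X_mul_sum_sum_C_mul (b : ι → κ → R) (c : ι → κ → σ → R)
    (f : ι → κ → MvPolynomial σ R) :
    ∑ l, X l * ∑ j, ∑ k, C (b j k * c j k l) * f j k =
      ∑ j, ∑ k, C (b j k) * (∑ l, C (c j k l) * X l) * f j k := by
  simp only [mul_sum, sum_mul]
  rw [sum_comm]
  refine sum_congr rfl fun j _ => ?_
  rw [sum_comm]
  refine sum_congr rfl fun k _ => sum_congr rfl fun l _ => ?_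
  rw [C_mul]
  ring

end Contraction

theorem pderiv_sum_C_mul_X {R σ : Type*} [CommSemiring R] [Fintype σ] [DecidableEq σ]
    (c : σ → R) (m : σ) : pderiv m (∑ j, C (c j) * X j) = C (c m) := by
  simp [Pi.single_apply]

theorem pderiv_sq_mul_sq {R σ : Type*} [CommSemiring R] [DecidableEq σ]
    (m : σ) (p q : MvPolynomial σ R) :
    pderiv m (p ^ 2 * q ^ 2) = 2 * (pderiv m p * p * q ^ 2 + pderiv m q * p ^ 2 * q) := by
  simp only [Derivation.leibniz, Derivation.leibniz_pow, smul_eq_mul]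
  ring

section LinearForms

variable {K ι : Type*} [Field K] [CharZero K] [Fintype ι]
  {a : Matrix ι ι K} {L : ι → MvPolynomial ι K}

theorem sum_sum_pderiv_eq_zero [DecidableEq ι] (hL : ∀ i, L i = ∑ j, C (a i j) * X j)
    (hyp : ∀ i l, ∑ j, ∑ k, C (a i j * a j k * a k l) * L j ^ 2 * L k ^ 2 = 0) (i l m : ι) :
    ∑ j, ∑ k, C (a i j * a j k * a k l) *
      (C (a j m) * L j * L k ^ 2 + C (a k m) * L j ^ 2 * L k) = 0 := by
  have hLm : ∀ j, pderiv m (L j) = C (a j m) := fun j => by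
    rw [hL, pderiv_sum_C_mul_X]
  have h := congrArg (pderiv m) (hyp i l)
  simp only [map_sum, map_zero, mul_assoc, pderiv_C_mul, pderiv_sq_mul_sq, hLm] at h
  simp only [mul_left_comm _ (2 : MvPolynomial ι K), ← mul_sum] at h
  simpa only [mul_assoc] using (mul_eq_zero.mp h).resolve_left two_ne_zero

theorem sum_sum_C_mul_mul_pow_three_eq_zero (hL : ∀ i, L i = ∑ j, C (a i j) * X j)
    (hyp : ∀ i l, ∑ j, ∑ k, C (a i j * a j k * a k l) * L j ^ 2 * L k ^ 2 = 0) (i m : ι) :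
    ∑ j, ∑ k, C (a i j * a j k * a j m) * L j * L k ^ 3 = 0 := by
  classical
  have h := sum_X_mul_sum_sum_C_mul (fun j k => a i j * a j k) (fun _ k l => a k l)
    (fun j k => C (a j m) * L j * L k ^ 2 + C (a k m) * L j ^ 2 * L k)
  simp only [sum_sum_pderiv_eq_zero hL hyp, mul_zero, sum_const_zero, ← hL] at h
  calc ∑ j, ∑ k, C (a i j * a j k * a j m) * L j * L k ^ 3
      = ∑ j, ∑ k, C (a i j * a j k * a j m) * L j * L k ^ 3 +
          ∑ j, ∑ k, C (a i j * a j k * a k m) * L j ^ 2 * L k ^ 2 := by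
        rw [hyp i m, add_zero]
    _ = ∑ j, ∑ k, C (a i j * a j k) * L k *
          (C (a j m) * L j * L k ^ 2 + C (a k m) * L j ^ 2 * L k) := by
        simp only [← sum_add_distrib]
        refine sum_congr rfl fun j _ => sum_congr rfl fun k _ => ?_
        simp only [C_mul]
        ring
    _ = 0 := h.symm

theorem sum_sum_C_mul_sq_mul_pow_three_eq_zero (hL : ∀ i, L i = ∑ j, C (a i j) * X j)
    (hyp : ∀ i l, ∑ j, ∑ k, C (a i j * a j k * a k l) * L j ^ 2 * L k ^ 2 = 0) (i : ι) :
    ∑ j, ∑ k, C (a i j * a j k) * L j ^ 2 * L k ^ 3 = 0 := by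
  have h := sum_X_mul_sum_sum_C_mul (fun j k => a i j * a j k) (fun j _ m => a j m)
    (fun j k => L j * L k ^ 3)
  simp only [← mul_assoc, sum_sum_C_mul_mul_pow_three_eq_zero hL hyp, mul_zero,
    sum_const_zero, ← hL] at h
  rw [h]
  refine sum_congr rfl fun j _ => sum_congr rfl fun k _ => ?_
  ring

end LinearForms

/-- If `∑_{j,k} a_{ij}a_{jk}a_{kl}L_j²L_k² = 0` for all `i, l`, then
`∑_{j,k} a_{ij}a_{jk}L_j²L_k³ = 0` for all `i` and
`∑_{j,k} a_{ij}a_{jk}a_{jm}L_jL_k³ = 0` for all `i, m`. -/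
theorem stmt16 {K : Type*} [Field K] [CharZero K] {n : ℕ}
    (a : Matrix (Fin n) (Fin n) K)
    (L : Fin n → MvPolynomial (Fin n) K)
    (hL : ∀ i, L i = ∑ j, C (a i j) * X j)
    (hyp : ∀ i l, ∑ j, ∑ k, C (a i j * a j k * a k l) * L j ^ 2 * L k ^ 2 = 0) :
    (∀ i, ∑ j, ∑ k, C (a i j * a j k) * L j ^ 2 * L k ^ 3 = 0) ∧
    (∀ i m, ∑ j, ∑ k, C (a i j * a j k * a j m) * L j * L k ^ 3 = 0) :=
  ⟨sum_sum_C_mul_sq_mul_pow_three_eq_zero hL hyp, sum_sum_C_mul_mul_pow_three_eq_zero hL hyp⟩
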